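/- Let n ≥ 1 be an integer. Then Λ^{(n)} = 2·Λ_x^{(n)}·Λ_z^{(n)}, i.e. (1/2) Σ_{α=0}^{3} (σ_α ⊗ σ̄_α)^{⊗n} = 2 · (1/2)(1 + σ_x^{⊗2n}) · (1/2)(1 + σ_z^{⊗2n}) as operators on (ℂ²)^{⊗2n}. -/
import Mathlib


open scoped Matrix ComplexConjugate

noncomputable section

/-- The four Pauli matrices: `σ 0 = 1`, `σ 1 = σ_x`, `σ 2 = σ_y`, `σ 3 = σ_z`. -/
def σ (α : Fin 4) : Matrix (Fin 2) (Fin 2) ℂ :=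
  if α = 0 then 1
  else if α = 1 then !![0, 1; 1, 0]
  else if α = 2 then !![0, -Complex.I; Complex.I, 0]
  else !![1, 0; 0, -1]

/-- The `m`-fold Kronecker power of a 2×2 matrix, as an operator on `(ℂ²)^{⊗m}`. -/
def kpow (M : Matrix (Fin 2) (Fin 2) ℂ) (m : ℕ) :
    Matrix (Fin m → Fin 2) (Fin m → Fin 2) ℂ :=
  fun s t => ∏ j, M (s j) (t j)

/-- `Λ_z^{(n)} = (1/2)(1 + σ_z^{⊗2n})`. -/
def LambdaZ (n : ℕ) : Matrix (Fin (2*n) → Fin 2) (Fin (2*n) → Fin 2) ℂ :=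
  ((1:ℂ)/2) • (1 + kpow (σ 3) (2*n))

/-- `Λ_x^{(n)} = (1/2)(1 + σ_x^{⊗2n})`. -/
def LambdaX (n : ℕ) : Matrix (Fin (2*n) → Fin 2) (Fin (2*n) → Fin 2) ℂ :=
  ((1:ℂ)/2) • (1 + kpow (σ 1) (2*n))

/-- `Λ^{(n)} = (1/2) Σ_{α=0}^{3} (σ_α ⊗ σ̄_α)^{⊗n}`, an operator on `(ℂ²)^{⊗2n}`:
the `k`-th tensor factor of `σ_α ⊗ σ̄_α` sits on qubits `2k` and `2k+1`. -/
def Lambda (n : ℕ) : Matrix (Fin (2*n) → Fin 2) (Fin (2*n) → Fin 2) ℂ :=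
  fun s t => ((1:ℂ)/2) * ∑ α : Fin 4, ∏ k : Fin n,
    σ α (s ⟨2*k.val, by have := k.isLt; omega⟩) (t ⟨2*k.val, by have := k.isLt; omega⟩) *
    conj (σ α (s ⟨2*k.val+1, by have := k.isLt; omega⟩) (t ⟨2*k.val+1, by have := k.isLt; omega⟩))

lemma L0 (a b c d : Fin 2) : σ 0 a b * conj (σ 0 c d)
    = (1 : Matrix (Fin 2) (Fin 2) ℂ) a b * (1 : Matrix (Fin 2) (Fin 2) ℂ) c d := by
  fin_cases a <;> fin_cases b <;> fin_cases c <;> fin_cases d <;>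
    simp [σ, Matrix.one_apply]
lemma L1 (a b c d : Fin 2) : σ 1 a b * conj (σ 1 c d) = σ 1 a b * σ 1 c d := by
  fin_cases a <;> fin_cases b <;> fin_cases c <;> fin_cases d <;> simp [σ]
lemma L3 (a b c d : Fin 2) : σ 3 a b * conj (σ 3 c d) = σ 3 a b * σ 3 c d := by
  fin_cases a <;> fin_cases b <;> fin_cases c <;> fin_cases d <;> simp [σ]
lemma L2 (a b c d : Fin 2) : σ 2 a b * conj (σ 2 c d)
    = (σ 1 a b * σ 3 b b) * (σ 1 c d * σ 3 d d) := by
  fin_cases a <;> fin_cases b <;> fin_cases c <;> fin_cases d <;>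
    simp [σ, Complex.ext_iff]

def pairEquiv (n : ℕ) : Fin n × Fin 2 ≃ Fin (2*n) where
  toFun p := ⟨2*p.1.val + p.2.val, by have := p.1.isLt; have := p.2.isLt; omega⟩
  invFun j := (⟨j.val/2, by have := j.isLt; omega⟩, ⟨j.val % 2, by omega⟩)
  left_inv := by rintro ⟨⟨k,hk⟩,⟨i,hi⟩⟩; simp only [Prod.mk.injEq, Fin.mk.injEq]; omega
  right_inv := by rintro ⟨j,hj⟩; simp only [Fin.mk.injEq]; omega

lemma prod_pair (n : ℕ) (f : Fin (2*n) → ℂ) :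
    ∏ k : Fin n, (f ⟨2*k.val, by have := k.isLt; omega⟩ * f ⟨2*k.val+1, by have := k.isLt; omega⟩)
      = ∏ j, f j := by
  rw [← Equiv.prod_comp (pairEquiv n) f, Fintype.prod_prod_type]
  refine Finset.prod_congr rfl fun k _ => ?_
  rw [Fin.prod_univ_two]
  rfl

lemma kpow_one (m : ℕ) : kpow 1 m = 1 := by
  ext s t
  by_cases h : s = t
  · subst h; simp [kpow, Matrix.one_apply]
  · obtain ⟨j, hj⟩ := Function.ne_iff.mp h
    rw [Matrix.one_apply_ne h]
    exact Finset.prod_eq_zero (Finset.mem_univ j) (Matrix.one_apply_ne hj)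

lemma σ3_offdiag {a b : Fin 2} (h : a ≠ b) : σ 3 a b = 0 := by
  fin_cases a <;> fin_cases b <;> simp_all [σ]

lemma kpow_z (m : ℕ) : kpow (σ 3) m
    = Matrix.diagonal (fun t : Fin m → Fin 2 => ∏ j, σ 3 (t j) (t j)) := by
  ext s t
  by_cases h : s = t
  · subst h; simp [kpow, Matrix.diagonal_apply_eq]
  · rw [Matrix.diagonal_apply_ne _ h]
    obtain ⟨j, hj⟩ := Function.ne_iff.mp h
    exact Finset.prod_eq_zero (Finset.mem_univ j) (σ3_offdiag hj)

/-- `Λ^{(n)} = 2 · Λ_x^{(n)} · Λ_z^{(n)}`. -/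
theorem lambda_eq_two_lambdaX_mul_lambdaZ (n : ℕ) (hn : 1 ≤ n) :
    Lambda n = (2:ℂ) • (LambdaX n * LambdaZ n) := by
  have key : LambdaX n * LambdaZ n
      = ((1:ℂ)/4) • (1 + kpow (σ 1) (2*n) + kpow (σ 3) (2*n)
          + kpow (σ 1) (2*n) * kpow (σ 3) (2*n)) := by
    rw [LambdaX, LambdaZ, Matrix.smul_mul, Matrix.mul_smul, smul_smul]
    rw [add_mul, one_mul, mul_add, mul_one]
    ring_nf
    congr 1
    abel
  rw [key, smul_smul]
  norm_num
  ext s t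
  rw [Lambda]
  simp only [Matrix.smul_apply, Matrix.add_apply, smul_eq_mul]
  rw [Fin.sum_univ_four]
  congr 1
  -- four terms
  have h0 : (∏ k : Fin n,
      σ 0 (s ⟨2*k.val, by have := k.isLt; omega⟩) (t ⟨2*k.val, by have := k.isLt; omega⟩) *
      conj (σ 0 (s ⟨2*k.val+1, by have := k.isLt; omega⟩) (t ⟨2*k.val+1, by have := k.isLt; omega⟩)))
      = (1 : Matrix (Fin (2*n) → Fin 2) (Fin (2*n) → Fin 2) ℂ) s t := by
    calc _ = ∏ k : Fin n, ((fun j => (1 : Matrix (Fin 2) (Fin 2) ℂ) (s j) (t j)) ⟨2*k.val, by have := k.isLt; omega⟩ *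
            (fun j => (1 : Matrix (Fin 2) (Fin 2) ℂ) (s j) (t j)) ⟨2*k.val+1, by have := k.isLt; omega⟩) :=
          Finset.prod_congr rfl fun k _ => L0 _ _ _ _
      _ = ∏ j, (1 : Matrix (Fin 2) (Fin 2) ℂ) (s j) (t j) :=
          prod_pair n (fun j => (1 : Matrix (Fin 2) (Fin 2) ℂ) (s j) (t j))
      _ = kpow 1 (2*n) s t := rfl
      _ = _ := by rw [kpow_one]
  have h1 : (∏ k : Fin n,
      σ 1 (s ⟨2*k.val, by have := k.isLt; omega⟩) (t ⟨2*k.val, by have := k.isLt; omega⟩) *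
      conj (σ 1 (s ⟨2*k.val+1, by have := k.isLt; omega⟩) (t ⟨2*k.val+1, by have := k.isLt; omega⟩)))
      = kpow (σ 1) (2*n) s t := by
    calc _ = ∏ k : Fin n, ((fun j => σ 1 (s j) (t j)) ⟨2*k.val, by have := k.isLt; omega⟩ *
            (fun j => σ 1 (s j) (t j)) ⟨2*k.val+1, by have := k.isLt; omega⟩) :=
          Finset.prod_congr rfl fun k _ => L1 _ _ _ _
      _ = ∏ j, σ 1 (s j) (t j) := prod_pair n (fun j => σ 1 (s j) (t j))
  have h3 : (∏ k : Fin n,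
      σ 3 (s ⟨2*k.val, by have := k.isLt; omega⟩) (t ⟨2*k.val, by have := k.isLt; omega⟩) *
      conj (σ 3 (s ⟨2*k.val+1, by have := k.isLt; omega⟩) (t ⟨2*k.val+1, by have := k.isLt; omega⟩)))
      = kpow (σ 3) (2*n) s t := by
    calc _ = ∏ k : Fin n, ((fun j => σ 3 (s j) (t j)) ⟨2*k.val, by have := k.isLt; omega⟩ *
            (fun j => σ 3 (s j) (t j)) ⟨2*k.val+1, by have := k.isLt; omega⟩) :=
          Finset.prod_congr rfl fun k _ => L3 _ _ _ _
      _ = ∏ j, σ 3 (s j) (t j) := prod_pair n (fun j => σ 3 (s j) (t j))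
  have h2 : (∏ k : Fin n,
      σ 2 (s ⟨2*k.val, by have := k.isLt; omega⟩) (t ⟨2*k.val, by have := k.isLt; omega⟩) *
      conj (σ 2 (s ⟨2*k.val+1, by have := k.isLt; omega⟩) (t ⟨2*k.val+1, by have := k.isLt; omega⟩)))
      = (kpow (σ 1) (2*n) * kpow (σ 3) (2*n)) s t := by
    calc _ = ∏ k : Fin n, ((fun j => σ 1 (s j) (t j) * σ 3 (t j) (t j)) ⟨2*k.val, by have := k.isLt; omega⟩ *
            (fun j => σ 1 (s j) (t j) * σ 3 (t j) (t j)) ⟨2*k.val+1, by have := k.isLt; omega⟩) :=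
          Finset.prod_congr rfl fun k _ => L2 _ _ _ _
      _ = ∏ j, (σ 1 (s j) (t j) * σ 3 (t j) (t j)) :=
          prod_pair n (fun j => σ 1 (s j) (t j) * σ 3 (t j) (t j))
      _ = (∏ j, σ 1 (s j) (t j)) * ∏ j, σ 3 (t j) (t j) := Finset.prod_mul_distrib
      _ = _ := by rw [kpow_z, Matrix.mul_diagonal]; rfl
  rw [h0, h1, h2, h3]
  ring
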